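/- arXiv:2306.12237 — 11 statements merged into one kernel-verified Lean document; each statement's English description precedes it below -/
import Mathlib

section
/- Let T and A be bounded linear operators on a Hilbert space H, let K be a Hilbert space containing H (as a closed subspace), let T̃ be a bounded operator on K extending T with ‖T̃‖ = ‖T‖, and let Ã be any bounded operator on K extending A. If T ⊥_B A then T̃ ⊥_B Ã. -/
/-- A norm preserving extension of `T` is Birkhoff-James orthogonal to any extension of `A`,
whenever `T ⊥_B A`. -/
theorem birkhoffJames_of_extensions
    {K : Type*} [NormedAddCommGroup K] [InnerProductSpace ℂ K] [CompleteSpace K]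
    (p : Submodule ℂ K) [CompleteSpace p]
    (T A : p →L[ℂ] p) (T' A' : K →L[ℂ] K)
    (hT' : ∀ x : p, T' x = (T x : K)) (hA' : ∀ x : p, A' x = (A x : K))
    (hnorm : ‖T'‖ = ‖T‖)
    (hBJ : ∀ lam : ℂ, ‖T + lam • A‖ ≥ ‖T‖) :
    ∀ lam : ℂ, ‖T' + lam • A'‖ ≥ ‖T'‖ := by
  intro lam
  have key : ‖T + lam • A‖ ≤ ‖T' + lam • A'‖ := by
    apply ContinuousLinearMap.opNorm_le_bound _ (norm_nonneg _)
    intro x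
    have hx : (((T + lam • A) x : p) : K) = (T' + lam • A') (x : K) := by
      simp [hT' x, hA' x]
    calc ‖(T + lam • A) x‖ = ‖(T' + lam • A') (x : K)‖ := by
          rw [← hx]; rfl
      _ ≤ ‖T' + lam • A'‖ * ‖(x : K)‖ := (T' + lam • A').le_opNorm _
      _ = ‖T' + lam • A'‖ * ‖x‖ := by rw [Submodule.norm_coe]
  calc ‖T'‖ = ‖T‖ := hnorm
    _ ≤ ‖T + lam • A‖ := hBJ lam
    _ ≤ ‖T' + lam • A'‖ := key
end

section
/- Let T be a self-adjoint bounded operator on a Hilbert space H and let (xₙ) be a sequence of unit vectors with ‖T²xₙ‖ → ‖T²‖ = ‖T‖². Then for every integer k ≥ 0, ‖T^{2k}xₙ − ‖T‖^{2k}·xₙ‖ → 0 as n → ∞. -/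
/-!
Put `S = T²` and `c = ‖T‖²`. Since `T` is self-adjoint, `c · re ⟪S x, x⟫ = ‖T‖² ‖T x‖² ≥ ‖S x‖²`,
so expanding the square gives `‖S x - c x‖² ≤ c² ‖x‖² - ‖S x‖²`, which tends to `0` along the
norming sequence. Thus `(xₙ)` is an approximate eigenvector of `S` for `c`, hence of `Sᵏ` for `cᵏ`.
-/

open Filter Topology RCLike

section ApproximateEigenvector

variable {𝕜 E ι : Type*} [NontriviallyNormedField 𝕜] [SeminormedAddCommGroup E] [NormedSpace 𝕜 E]

theorem ContinuousLinearMap.norm_pow_succ_apply_sub_smul_le (S : E →L[𝕜] E) (c : 𝕜) (k : ℕ)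
    (v : E) :
    ‖(S ^ (k + 1)) v - c ^ (k + 1) • v‖ ≤
      ‖S‖ * ‖(S ^ k) v - c ^ k • v‖ + ‖c‖ ^ k * ‖S v - c • v‖ :=
  calc ‖(S ^ (k + 1)) v - c ^ (k + 1) • v‖
      = ‖S ((S ^ k) v - c ^ k • v) + c ^ k • (S v - c • v)‖ := by
        rw [pow_succ', mul_apply_eq_comp, map_sub, map_smul, smul_sub, smul_smul,
          ← pow_succ, sub_add_sub_cancel]
    _ ≤ ‖S ((S ^ k) v - c ^ k • v)‖ + ‖c ^ k • (S v - c • v)‖ := norm_add_le _ _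
    _ ≤ ‖S‖ * ‖(S ^ k) v - c ^ k • v‖ + ‖c‖ ^ k * ‖S v - c • v‖ := by
        rw [norm_smul, norm_pow]
        gcongr
        exact S.le_opNorm _

theorem ContinuousLinearMap.tendsto_norm_pow_apply_sub_smul {S : E →L[𝕜] E} {c : 𝕜}
    {l : Filter ι} {x : ι → E} (h : Tendsto (fun n => ‖S (x n) - c • x n‖) l (𝓝 0)) (k : ℕ) :
    Tendsto (fun n => ‖(S ^ k) (x n) - c ^ k • x n‖) l (𝓝 0) := by
  induction k with
  | zero => simpa using tendsto_const_nhds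
  | succ k ih =>
    refine squeeze_zero (fun _ => norm_nonneg _)
      (fun n => S.norm_pow_succ_apply_sub_smul_le c k (x n)) ?_
    simpa using (ih.const_mul ‖S‖).add (h.const_mul (‖c‖ ^ k))

end ApproximateEigenvector

section InnerProduct

variable {𝕜 E : Type*} [RCLike 𝕜] [NormedAddCommGroup E] [InnerProductSpace 𝕜 E]

theorem norm_sub_smul_sq_le_of_norm_sq_le {x y : E} {c : ℝ}
    (h : ‖y‖ ^ 2 ≤ c * re (inner 𝕜 y x)) :
    ‖y - (c : 𝕜) • x‖ ^ 2 ≤ c ^ 2 * ‖x‖ ^ 2 - ‖y‖ ^ 2 := by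
  rw [norm_sub_sq (𝕜 := 𝕜), inner_smul_right, re_ofReal_mul, norm_smul, norm_ofReal,
    mul_pow, sq_abs]
  linarith

theorem IsSelfAdjoint.norm_sq_apply_sq_le [CompleteSpace E] {T : E →L[𝕜] E}
    (hT : IsSelfAdjoint T) (x : E) :
    ‖(T ^ 2) x‖ ^ 2 ≤ ‖T‖ ^ 2 * re (inner 𝕜 ((T ^ 2) x) x) := by
  have hTT : (T ^ 2) x = T (T x) := by rw [pow_two, mul_apply_eq_comp]
  have hsymm := hT.isSymmetric (T x) x
  rw [ContinuousLinearMap.coe_coe] at hsymm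
  rw [hTT, hsymm, inner_self_eq_norm_sq, ← mul_pow]
  gcongr
  exact T.le_opNorm _

end InnerProduct

/-- For a self-adjoint operator `T` and a norming sequence of `T²`,
`‖T^{2k} xₙ - ‖T‖^{2k} xₙ‖ → 0` for every `k ≥ 0`. -/
theorem selfAdjoint_even_power_norming
    {H : Type*} [NormedAddCommGroup H] [InnerProductSpace ℂ H] [CompleteSpace H]
    (T : H →L[ℂ] H) (hT : IsSelfAdjoint T)
    (x : ℕ → H) (hx : ∀ n, ‖x n‖ = 1)
    (hnorm : Tendsto (fun n => ‖(T ^ 2) (x n)‖) atTop (𝓝 (‖T‖ ^ 2))) :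
    ∀ k : ℕ,
      Tendsto (fun n => ‖(T ^ (2 * k)) (x n) - (‖T‖ ^ (2 * k) : ℝ) • x n‖) atTop (𝓝 0) := by
  intro k
  have hbound : ∀ n, ‖(T ^ 2) (x n) - ((‖T‖ ^ 2 : ℝ) : ℂ) • x n‖ ^ 2 ≤
      (‖T‖ ^ 2) ^ 2 - ‖(T ^ 2) (x n)‖ ^ 2 := fun n => by
    have := norm_sub_smul_sq_le_of_norm_sq_le (hT.norm_sq_apply_sq_le (x n))
    rwa [hx n, one_pow, mul_one] at this
  have hgap : Tendsto (fun n => (‖T‖ ^ 2) ^ 2 - ‖(T ^ 2) (x n)‖ ^ 2) atTop (𝓝 0) := by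
    rw [← sub_self ((‖T‖ ^ 2) ^ 2)]
    exact (hnorm.pow 2).const_sub _
  have hsq : Tendsto (fun n => ‖(T ^ 2) (x n) - ((‖T‖ ^ 2 : ℝ) : ℂ) • x n‖ ^ 2) atTop (𝓝 0) :=
    squeeze_zero (fun _ => by positivity) hbound hgap
  have happrox : Tendsto (fun n => ‖(T ^ 2) (x n) - ((‖T‖ ^ 2 : ℝ) : ℂ) • x n‖) atTop (𝓝 0) := by
    simpa using hsq.sqrt
  simpa only [← pow_mul, ← Complex.ofReal_pow, Complex.coe_smul] using
    ContinuousLinearMap.tendsto_norm_pow_apply_sub_smul happrox k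
end

section
/- Let T be a self-adjoint bounded operator on a Hilbert space H and let (xₙ) be a norming sequence of unit vectors for T (i.e., ‖Txₙ‖ → ‖T‖). Then for every integer k ≥ 0, ‖T^{2k+1}xₙ − ‖T‖^{2k}·Txₙ‖ → 0 as n → ∞. -/
/-!
For symmetric `T`, expanding the square and using `‖T (T x)‖ ≤ ‖T‖ ‖T x‖` gives
`‖T² x - ‖T‖² x‖² ≤ ‖T‖² (‖T‖² ‖x‖² - ‖T x‖²)`, so a norming sequence of unit vectors is an
approximate eigenvector of `T²` for `‖T‖²`. Since `T²` commutes with the scalar `‖T‖²`, the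
factorisation `A ^ k - B ^ k = (∑ A ^ i B ^ (k - 1 - i)) (A - B)` passes this to `T ^ (2k)` and
`‖T‖ ^ (2k)`; applying the bounded operator `T` gives the claim.
-/

open Filter Topology

section

variable {𝕜 E : Type*} [RCLike 𝕜] [NormedAddCommGroup E] [InnerProductSpace 𝕜 E]

theorem LinearMap.IsSymmetric.norm_apply_apply_sub_sq_le {T : E →L[𝕜] E}
    (hT : (T : E →ₗ[𝕜] E).IsSymmetric) (x : E) :
    ‖T (T x) - ((‖T‖ ^ 2 : ℝ) : 𝕜) • x‖ ^ 2 ≤ ‖T‖ ^ 2 * (‖T‖ ^ 2 * ‖x‖ ^ 2 - ‖T x‖ ^ 2) := by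
  have hinner : inner 𝕜 (T (T x)) x = (‖T x‖ ^ 2 : ℝ) := by
    rw [← ContinuousLinearMap.coe_coe T, hT, inner_self_eq_norm_sq_to_K]; simp
  have hTTx : ‖T (T x)‖ ^ 2 ≤ (‖T‖ * ‖T x‖) ^ 2 := by gcongr; exact T.le_opNorm _
  rw [@norm_sub_sq 𝕜, inner_smul_right, hinner, norm_smul]
  simp only [RCLike.norm_ofReal, ← RCLike.ofReal_mul, RCLike.ofReal_re]
  rw [abs_of_nonneg (by positivity)]
  linarith

theorem LinearMap.IsSymmetric.tendsto_apply_apply_sub_of_norming {T : E →L[𝕜] E}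
    (hT : (T : E →ₗ[𝕜] E).IsSymmetric) {ι : Type*} {l : Filter ι} {x : ι → E}
    (hx : ∀ i, ‖x i‖ ≤ 1) (hnorm : Tendsto (fun i => ‖T (x i)‖) l (𝓝 ‖T‖)) :
    Tendsto (fun i => T (T (x i)) - ((‖T‖ ^ 2 : ℝ) : 𝕜) • x i) l (𝓝 0) := by
  have hbound : Tendsto (fun i => ‖T‖ ^ 2 * (‖T‖ ^ 2 - ‖T (x i)‖ ^ 2)) l (𝓝 0) := by
    have := ((hnorm.pow 2).const_sub (‖T‖ ^ 2)).const_mul (‖T‖ ^ 2)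
    rwa [sub_self, mul_zero] at this
  rw [tendsto_zero_iff_norm_tendsto_zero]
  refine squeeze_zero (fun _ => norm_nonneg _) (fun i => ?_)
    (by simpa using (Real.continuous_sqrt.tendsto 0).comp hbound)
  rw [← abs_norm]
  refine Real.abs_le_sqrt ((hT.norm_apply_apply_sub_sq_le (x i)).trans ?_)
  have hx2 : ‖x i‖ ^ 2 ≤ 1 := pow_le_one₀ (norm_nonneg _) (hx i)
  beta_reduce
  gcongr
  exact mul_le_of_le_one_right (by positivity) hx2

end

theorem Commute.tendsto_pow_sub_pow_apply {𝕜 E : Type*} [NontriviallyNormedField 𝕜]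
    [NormedAddCommGroup E] [NormedSpace 𝕜 E] {A B : E →L[𝕜] E} (hAB : Commute A B)
    {ι : Type*} {l : Filter ι} {y : ι → E} (hy : Tendsto (fun i => (A - B) (y i)) l (𝓝 0))
    (k : ℕ) : Tendsto (fun i => (A ^ k - B ^ k) (y i)) l (𝓝 0) := by
  rw [← hAB.geom_sum₂_mul]
  simp only [mul_apply_eq_comp]
  exact ((ContinuousLinearMap.continuous _).tendsto' 0 0 (map_zero _)).comp hy

/-- For a self-adjoint operator `T` and a norming sequence of `T`,
`‖T^{2k+1} xₙ - ‖T‖^{2k} T xₙ‖ → 0` for every `k ≥ 0`. -/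
theorem selfAdjoint_odd_power_norming
    {H : Type*} [NormedAddCommGroup H] [InnerProductSpace ℂ H] [CompleteSpace H]
    (T : H →L[ℂ] H) (hT : IsSelfAdjoint T)
    (x : ℕ → H) (hx : ∀ n, ‖x n‖ = 1)
    (hnorm : Tendsto (fun n => ‖T (x n)‖) atTop (𝓝 ‖T‖)) :
    ∀ k : ℕ,
      Tendsto (fun n => ‖(T ^ (2 * k + 1)) (x n) - (‖T‖ ^ (2 * k) : ℝ) • T (x n)‖)
        atTop (𝓝 0) := by
  intro k
  set c : H →L[ℂ] H := algebraMap ℂ _ ((‖T‖ ^ 2 : ℝ) : ℂ)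
  have hsq : Tendsto (fun n => (T ^ 2 - c) (x n)) atTop (𝓝 0) :=
    hT.isSymmetric.tendsto_apply_apply_sub_of_norming (fun n => (hx n).le) hnorm
  have hpow := (T.continuous.tendsto' 0 0 (map_zero T)).comp
    ((Algebra.commute_algebraMap_right _ _).tendsto_pow_sub_pow_apply hsq k)
  rw [← tendsto_zero_iff_norm_tendsto_zero]
  convert hpow using 2 with n
  simp only [Function.comp_apply, c, ← map_pow, sub_apply, ContinuousLinearMap.algebraMap_apply,
    map_sub, ContinuousLinearMap.map_smul_of_tower, ← mul_apply_eq_comp, ← pow_mul, ← pow_succ',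
    ← Complex.ofReal_pow, Complex.coe_smul]
end

section
/- Let T be a self-adjoint operator and A any bounded operator on a Hilbert space H. If T ⊥_B A then T^{2k+1} ⊥_B A for every integer k ≥ 0. -/
/-!
Testing `‖T + t • (λ • A)‖ ≥ ‖T‖` for small `t > 0` produces vectors `xₙ` in the unit ball with
`‖T xₙ‖ → ‖T‖` and `liminf re ⟪T xₙ, λ A xₙ⟫ ≥ 0`; conversely, such a sequence for an operator `S`
forces `‖S + λ A‖ ≥ lim ‖S xₙ‖`. For self-adjoint `T` and `‖x‖ ≤ 1` one has
`‖T² x - ‖T‖² x‖² ≤ ‖T‖² (‖T‖² - ‖T x‖²)`, so `T^(2k+1) xₙ - ‖T‖^(2k) T xₙ → 0`, and the same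
sequence serves `T^(2k+1)`, with limit `‖T‖^(2k+1) ≥ ‖T^(2k+1)‖`.
-/

open Filter Topology
open scoped InnerProductSpace

theorem tendsto_pow_apply_sub_smul_pow {𝕜 F : Type*} [NontriviallyNormedField 𝕜]
    [NormedAddCommGroup F] [NormedSpace 𝕜 F] (U : F →L[𝕜] F) (c : 𝕜) {x : ℕ → F}
    (h : Tendsto (fun n ↦ U (x n) - c • x n) atTop (𝓝 0)) (k : ℕ) :
    Tendsto (fun n ↦ (U ^ k) (x n) - c ^ k • x n) atTop (𝓝 0) := by
  induction k with
  | zero => simp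
  | succ k ih =>
    have hstep : ∀ n, (U ^ (k + 1)) (x n) - c ^ (k + 1) • x n
        = U ((U ^ k) (x n) - c ^ k • x n) + c ^ k • (U (x n) - c • x n) := fun n ↦ by
      rw [pow_succ', mul_apply_eq_comp, map_sub, map_smul, pow_succ, mul_smul]
      module
    simp only [hstep]
    simpa using ((U.continuous.tendsto 0).comp ih).add (h.const_smul (c ^ k))

section InnerProductSpace

variable {𝕜 E : Type*} [RCLike 𝕜] [NormedAddCommGroup E] [InnerProductSpace 𝕜 E]

/-- The Bhatia–Šemrl sequence condition for `S ⊥_B R`, weakened to the single direction `R`. -/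
structure IsBirkhoffJamesSeq (S R : E →L[𝕜] E) (c : ℝ) (x : ℕ → E) : Prop where
  norm_le_one : ∀ n, ‖x n‖ ≤ 1
  tendsto_norm_apply : Tendsto (fun n ↦ ‖S (x n)‖) atTop (𝓝 c)
  exists_le_re_inner : ∃ δ : ℕ → ℝ, Tendsto δ atTop (𝓝 0) ∧
    ∀ n, δ n ≤ RCLike.re ⟪S (x n), R (x n)⟫_𝕜

namespace IsBirkhoffJamesSeq

variable {S R : E →L[𝕜] E} {c : ℝ} {x : ℕ → E}

theorem le_norm_add (h : IsBirkhoffJamesSeq S R c x) : c ≤ ‖S + R‖ := by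
  obtain ⟨δ, hδ, hδx⟩ := h.exists_le_re_inner
  have hc : 0 ≤ c := ge_of_tendsto' h.tendsto_norm_apply fun n ↦ norm_nonneg _
  have hlim : Tendsto (fun n ↦ ‖S (x n)‖ ^ 2 + 2 * δ n) atTop (𝓝 (c ^ 2)) := by
    simpa using (h.tendsto_norm_apply.pow 2).add (hδ.const_mul 2)
  have hbound : ∀ n, ‖S (x n)‖ ^ 2 + 2 * δ n ≤ ‖S + R‖ ^ 2 := fun n ↦ calc
    ‖S (x n)‖ ^ 2 + 2 * δ n
        ≤ ‖S (x n)‖ ^ 2 + 2 * RCLike.re ⟪S (x n), R (x n)⟫_𝕜 + ‖R (x n)‖ ^ 2 := by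
          nlinarith [hδx n, sq_nonneg ‖R (x n)‖]
    _ = ‖(S + R) (x n)‖ ^ 2 := (norm_add_sq _ _).symm
    _ ≤ ‖S + R‖ ^ 2 := by gcongr; exact (S + R).unit_le_opNorm _ (h.norm_le_one n)
  exact (pow_le_pow_iff_left₀ hc (norm_nonneg _) two_ne_zero).mp (le_of_tendsto' hlim hbound)

theorem of_tendsto_sub_smul {S' : E →L[𝕜] E} {a : ℝ} (h : IsBirkhoffJamesSeq S R c x)
    (ha : 0 ≤ a) (hS' : Tendsto (fun n ↦ S' (x n) - (a : 𝕜) • S (x n)) atTop (𝓝 0)) :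
    IsBirkhoffJamesSeq S' R (a * c) x := by
  set e := fun n ↦ S' (x n) - (a : 𝕜) • S (x n)
  have hS'x : ∀ n, S' (x n) = e n + (a : 𝕜) • S (x n) := fun n ↦ by simp [e]
  have he : Tendsto (fun n ↦ ‖e n‖) atTop (𝓝 0) := tendsto_zero_iff_norm_tendsto_zero.mp hS'
  refine ⟨h.norm_le_one, ?_, ?_⟩
  · refine (h.tendsto_norm_apply.const_mul a).congr_dist
      (squeeze_zero (fun _ ↦ dist_nonneg) (fun n ↦ ?_) he)
    rw [hS'x, Real.dist_eq, abs_sub_comm]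
    calc |‖e n + (a : 𝕜) • S (x n)‖ - a * ‖S (x n)‖|
        = |‖e n + (a : 𝕜) • S (x n)‖ - ‖(a : 𝕜) • S (x n)‖| := by
          rw [norm_smul, RCLike.norm_ofReal, abs_of_nonneg ha]
      _ ≤ ‖e n‖ := by
          simpa using abs_norm_sub_norm_le (e n + (a : 𝕜) • S (x n)) ((a : 𝕜) • S (x n))
  · obtain ⟨δ, hδ, hδx⟩ := h.exists_le_re_inner
    refine ⟨fun n ↦ a * δ n - ‖e n‖ * ‖R‖,
      by simpa using (hδ.const_mul a).sub (he.mul_const ‖R‖), fun n ↦ ?_⟩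
    have hen : -(‖e n‖ * ‖R‖) ≤ RCLike.re ⟪e n, R (x n)⟫_𝕜 := calc
      -(‖e n‖ * ‖R‖) ≤ -(‖e n‖ * ‖R (x n)‖) := by
        gcongr; exact R.unit_le_opNorm _ (h.norm_le_one n)
      _ ≤ RCLike.re ⟪e n, R (x n)⟫_𝕜 :=
        neg_le_of_abs_le ((RCLike.abs_re_le_norm _).trans (norm_inner_le_norm _ _))
    rw [hS'x, inner_add_left, inner_smul_real_left, map_add, RCLike.smul_re]
    nlinarith [hδx n]

end IsBirkhoffJamesSeq

section Estimates

variable {S R : E →L[𝕜] E} {x : E} {t : ℝ}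

theorem norm_sub_le_norm_apply_of_lt_norm_add_smul_apply (hx : ‖x‖ ≤ 1) (ht : 0 < t)
    (h : ‖S‖ - t ^ 2 < ‖(S + (t : 𝕜) • R) x‖) : ‖S‖ - t ^ 2 - t * ‖R‖ ≤ ‖S x‖ := by
  have hsum : ‖(S + (t : 𝕜) • R) x‖ ≤ ‖S x‖ + t * ‖R‖ := calc
    ‖(S + (t : 𝕜) • R) x‖ ≤ ‖S x‖ + ‖(t : 𝕜) • R x‖ := norm_add_le _ _
    _ ≤ ‖S x‖ + t * ‖R‖ := by
      rw [norm_smul, RCLike.norm_ofReal, abs_of_pos ht]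
      gcongr
      exact R.unit_le_opNorm _ hx
  linarith

theorem neg_mul_le_re_inner_of_lt_norm_add_smul_apply (hx : ‖x‖ ≤ 1) (ht : 0 < t)
    (h : ‖S‖ - t ^ 2 < ‖(S + (t : 𝕜) • R) x‖) :
    -((‖S‖ + ‖R‖ ^ 2 / 2) * t) ≤ RCLike.re ⟪S x, R x⟫_𝕜 := by
  have hexp : ‖(S + (t : 𝕜) • R) x‖ ^ 2
      = ‖S x‖ ^ 2 + 2 * t * RCLike.re ⟪S x, R x⟫_𝕜 + t ^ 2 * ‖R x‖ ^ 2 := by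
    rw [add_apply, smul_apply, norm_add_sq (𝕜 := 𝕜),
      inner_smul_right, RCLike.re_ofReal_mul, norm_smul, RCLike.norm_ofReal, abs_of_pos ht]
    ring
  have hSx := S.unit_le_opNorm _ hx
  have hRx := R.unit_le_opNorm _ hx
  have hlow : ‖S‖ ^ 2 - 2 * ‖S‖ * t ^ 2 ≤ ‖(S + (t : 𝕜) • R) x‖ ^ 2 := by
    rcases le_or_gt 0 (‖S‖ - t ^ 2) with hpos | hneg
    · nlinarith [pow_le_pow_left₀ hpos h.le 2, sq_nonneg (t ^ 2)]
    · nlinarith [norm_nonneg S, sq_nonneg ‖(S + (t : 𝕜) • R) x‖]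
  have hSx2 := pow_le_pow_left₀ (norm_nonneg _) hSx 2
  have hRx2 := pow_le_pow_left₀ (norm_nonneg _) hRx 2
  have hre : -(2 * ‖S‖ * t ^ 2 + t ^ 2 * ‖R‖ ^ 2) ≤ 2 * t * RCLike.re ⟪S x, R x⟫_𝕜 := by
    nlinarith [sq_nonneg t]
  nlinarith

end Estimates

theorem exists_isBirkhoffJamesSeq {S R : E →L[𝕜] E}
    (h : ∀ t : ℝ, 0 < t → ‖S‖ ≤ ‖S + (t : 𝕜) • R‖) : ∃ x, IsBirkhoffJamesSeq S R ‖S‖ x := by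
  set t : ℕ → ℝ := fun n ↦ 1 / (n + 1)
  have ht : ∀ n, 0 < t n := fun n ↦ by positivity
  have ht0 : Tendsto t atTop (𝓝 0) := tendsto_one_div_add_atTop_nhds_zero_nat
  have hx : ∀ n, ∃ x : E, ‖x‖ < 1 ∧ ‖S‖ - t n ^ 2 < ‖(S + (t n : 𝕜) • R) x‖ := fun n ↦
    (S + (t n : 𝕜) • R).exists_lt_apply_of_lt_opNorm <| by nlinarith [h _ (ht n), ht n]
  choose x hx1 hxS using hx
  refine ⟨x, fun n ↦ (hx1 n).le, ?_, fun n ↦ -((‖S‖ + ‖R‖ ^ 2 / 2) * t n), ?_, fun n ↦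
    neg_mul_le_re_inner_of_lt_norm_add_smul_apply (hx1 n).le (ht n) (hxS n)⟩
  · refine tendsto_of_tendsto_of_tendsto_of_le_of_le (g := fun n ↦ ‖S‖ - t n ^ 2 - t n * ‖R‖)
      ?_ tendsto_const_nhds
      (fun n ↦ norm_sub_le_norm_apply_of_lt_norm_add_smul_apply (hx1 n).le (ht n) (hxS n))
      (fun n ↦ S.unit_le_opNorm _ (hx1 n).le)
    simpa using (tendsto_const_nhds.sub (ht0.pow 2)).sub (ht0.mul_const ‖R‖)
  · simpa using (ht0.const_mul (‖S‖ + ‖R‖ ^ 2 / 2)).neg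

theorem norm_apply_apply_sub_smul_sq_le {T : E →L[𝕜] E} (hT : (T : E →ₗ[𝕜] E).IsSymmetric)
    {x : E} (hx : ‖x‖ ≤ 1) :
    ‖T (T x) - ((‖T‖ ^ 2 : ℝ) : 𝕜) • x‖ ^ 2 ≤ ‖T‖ ^ 2 * (‖T‖ ^ 2 - ‖T x‖ ^ 2) := by
  have hinner : RCLike.re ⟪T (T x), ((‖T‖ ^ 2 : ℝ) : 𝕜) • x⟫_𝕜 = ‖T‖ ^ 2 * ‖T x‖ ^ 2 := by
    have hsymm : ⟪T (T x), x⟫_𝕜 = ⟪T x, T x⟫_𝕜 := hT (T x) x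
    rw [inner_smul_right, RCLike.re_ofReal_mul, hsymm, inner_self_eq_norm_sq]
  have hTTx : ‖T (T x)‖ ≤ ‖T‖ * ‖T x‖ := T.le_opNorm _
  have hcx : ‖((‖T‖ ^ 2 : ℝ) : 𝕜) • x‖ ≤ ‖T‖ ^ 2 := by
    rw [norm_smul, RCLike.norm_ofReal, abs_of_nonneg (by positivity)]
    nlinarith [sq_nonneg ‖T‖]
  rw [norm_sub_sq (𝕜 := 𝕜), hinner]
  nlinarith [norm_nonneg (T (T x)), norm_nonneg (((‖T‖ ^ 2 : ℝ) : 𝕜) • x), norm_nonneg (T x)]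

theorem IsBirkhoffJamesSeq.pow_odd {T R : E →L[𝕜] E} (hT : (T : E →ₗ[𝕜] E).IsSymmetric)
    {x : ℕ → E} (h : IsBirkhoffJamesSeq T R ‖T‖ x) (k : ℕ) :
    IsBirkhoffJamesSeq (T ^ (2 * k + 1)) R (‖T‖ ^ (2 * k + 1)) x := by
  have hsq : Tendsto (fun n ↦ (T ^ 2) (x n) - ((‖T‖ ^ 2 : ℝ) : 𝕜) • x n) atTop (𝓝 0) := by
    have hbound : Tendsto (fun n ↦ ‖T‖ ^ 2 * (‖T‖ ^ 2 - ‖T (x n)‖ ^ 2)) atTop (𝓝 0) := by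
      have := ((h.tendsto_norm_apply.pow 2).const_sub (‖T‖ ^ 2)).const_mul (‖T‖ ^ 2)
      rwa [sub_self, mul_zero] at this
    have hnorm_sq := squeeze_zero (fun _ ↦ sq_nonneg _)
      (fun n ↦ norm_apply_apply_sub_smul_sq_le hT (h.norm_le_one n)) hbound
    rw [tendsto_zero_iff_norm_tendsto_zero]
    simpa [pow_two, mul_apply_eq_comp, Real.sqrt_sq (norm_nonneg _)] using hnorm_sq.sqrt
  have hodd : Tendsto (fun n ↦ (T ^ (2 * k + 1)) (x n) - ((‖T‖ ^ (2 * k) : ℝ) : 𝕜) • T (x n))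
      atTop (𝓝 0) := by
    simpa [Function.comp_def, pow_succ', pow_mul, mul_apply_eq_comp] using
      (T.continuous.tendsto 0).comp (tendsto_pow_apply_sub_smul_pow _ _ hsq k)
  rw [pow_succ ‖T‖]
  exact h.of_tendsto_sub_smul (by positivity) hodd

end InnerProductSpace

/-- For self-adjoint `T`, `T ⊥_B A` implies `T^{2k+1} ⊥_B A` for every `k ≥ 0`. -/
theorem selfAdjoint_odd_power_birkhoffJames
    {H : Type*} [NormedAddCommGroup H] [InnerProductSpace ℂ H] [CompleteSpace H]
    (T A : H →L[ℂ] H) (hT : IsSelfAdjoint T)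
    (hBJ : ∀ lam : ℂ, ‖T + lam • A‖ ≥ ‖T‖) :
    ∀ k : ℕ, ∀ lam : ℂ, ‖T ^ (2 * k + 1) + lam • A‖ ≥ ‖T ^ (2 * k + 1)‖ := by
  intro k lam
  obtain ⟨x, hx⟩ := exists_isBirkhoffJamesSeq (S := T) (R := lam • A) fun t _ ↦ by
    simpa [smul_smul] using hBJ (t * lam)
  calc ‖T ^ (2 * k + 1)‖ ≤ ‖T‖ ^ (2 * k + 1) := norm_pow_le' T (by omega)
    _ ≤ ‖T ^ (2 * k + 1) + lam • A‖ :=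
      (hx.pow_odd (ContinuousLinearMap.isSelfAdjoint_iff_isSymmetric.mp hT) k).le_norm_add
end

section
/- Let T be a self-adjoint operator and A any bounded operator on a Hilbert space H. If T² ⊥_B A then T^{2k} ⊥_B A for every integer k ≥ 1. -/
/-!
Fix `λ`. Testing `T² ⊥_B A` against the scalars `t λ`, `t → 0`, yields unit vectors `xₙ` with
`‖T² xₙ‖ → ‖T²‖ = m` and `re (λ ⟪T² xₙ, A xₙ⟫)` bounded below by a null sequence; since the
vectors may depend on `λ`, no convexity of the maximal numerical range is needed. For self-adjoint
`T` these `xₙ` are approximate eigenvectors, `T² xₙ - m xₙ → 0`, so `T^{2k} xₙ - mᵏ xₙ → 0` and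
the lower bound passes to `re (λ ⟪xₙ, A xₙ⟫)`. Hence `re ⟪xₙ, (T^{2k} + λ A) xₙ⟫`, which is at most
`‖T^{2k} + λ A‖`, has limit inferior at least `mᵏ ≥ ‖T^{2k}‖`.
-/

open Filter Topology RCLike
open scoped InnerProductSpace

def BirkhoffJamesOrthogonal (𝕜 : Type*) {E : Type*} [NormedField 𝕜] [SeminormedAddCommGroup E]
    [NormedSpace 𝕜 E] (x y : E) : Prop :=
  ∀ μ : 𝕜, ‖x‖ ≤ ‖x + μ • y‖

theorem ContinuousLinearMap.tendsto_pow_apply_sub_smul {𝕜 E ι : Type*} [NormedField 𝕜]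
    [SeminormedAddCommGroup E] [NormedSpace 𝕜 E] {l : Filter ι} (P : E →L[𝕜] E) {μ : 𝕜}
    {x : ι → E} (h : Tendsto (fun i => P (x i) - μ • x i) l (𝓝 0)) (k : ℕ) :
    Tendsto (fun i => (P ^ k) (x i) - μ ^ k • x i) l (𝓝 0) := by
  induction k with
  | zero => simpa using tendsto_const_nhds
  | succ k ih =>
    have hsplit : ∀ i, (P ^ (k + 1)) (x i) - μ ^ (k + 1) • x i
        = (P ^ k) (P (x i) - μ • x i) + μ • ((P ^ k) (x i) - μ ^ k • x i) := by
      intro i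
      rw [pow_succ, mul_apply_eq_comp, map_sub, map_smul, smul_sub, smul_smul,
        pow_succ', sub_add_sub_cancel]
    have hlim := (((P ^ k).continuous.tendsto' 0 0 (map_zero _)).comp h).add (ih.const_smul μ)
    rw [smul_zero, add_zero] at hlim
    exact hlim.congr fun i => (hsplit i).symm

section InnerProduct

variable {𝕜 E : Type*} [RCLike 𝕜] [NormedAddCommGroup E] [InnerProductSpace 𝕜 E]

theorem ContinuousLinearMap.exists_norm_eq_one_lt_norm_apply {F : Type*} [NormedAddCommGroup F]
    [NormedSpace 𝕜 F] (f : E →L[𝕜] F) {r : ℝ} (hr : 0 ≤ r) (hrf : r < ‖f‖) :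
    ∃ x, ‖x‖ = 1 ∧ r < ‖f x‖ := by
  obtain ⟨x, hx1, hfx⟩ := f.exists_lt_apply_of_lt_opNorm hrf
  have hx0 : x ≠ 0 := by
    rintro rfl
    simp only [map_zero, norm_zero] at hfx
    linarith
  refine ⟨(‖x‖⁻¹ : 𝕜) • x, norm_smul_inv_norm hx0, ?_⟩
  have hnx : 0 < ‖x‖ := norm_pos_iff.2 hx0
  rw [map_smul, norm_smul, norm_inv, norm_ofReal, abs_norm, ← div_eq_inv_mul,
    lt_div_iff₀ hnx]
  nlinarith [norm_nonneg (f x)]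

theorem re_mul_inner_le_mul_re_add (R : E →L[𝕜] E) {x : E} (hx : ‖x‖ = 1) (μ : 𝕜) (v : E)
    (m : ℝ) :
    re (μ * ⟪v, R x⟫_𝕜) ≤ m * re (μ * ⟪x, R x⟫_𝕜) + ‖μ‖ * ‖v - (m : 𝕜) • x‖ * ‖R‖ := by
  have hsplit : μ * ⟪v, R x⟫_𝕜 = (m : 𝕜) * (μ * ⟪x, R x⟫_𝕜) + μ * ⟪v - (m : 𝕜) • x, R x⟫_𝕜 := by
    rw [inner_sub_left, inner_smul_left, conj_ofReal]
    ring
  have herr : ‖μ * ⟪v - (m : 𝕜) • x, R x⟫_𝕜‖ ≤ ‖μ‖ * ‖v - (m : 𝕜) • x‖ * ‖R‖ := by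
    rw [norm_mul, mul_assoc]
    gcongr
    calc ‖⟪v - (m : 𝕜) • x, R x⟫_𝕜‖ ≤ ‖v - (m : 𝕜) • x‖ * ‖R x‖ := norm_inner_le_norm _ _
      _ ≤ ‖v - (m : 𝕜) • x‖ * ‖R‖ := by
        gcongr
        simpa [hx] using R.le_opNorm x
  rw [hsplit, map_add, re_ofReal_mul]
  linarith [re_le_norm (μ * ⟪v - (m : 𝕜) • x, R x⟫_𝕜)]

theorem exists_lower_bound_re_mul_inner_of_tendsto_sub_smul {ι : Type*} {l : Filter ι}
    {P R : E →L[𝕜] E} {m : ℝ} (hm : 0 < m) {μ : 𝕜} {x : ι → E} (hx : ∀ i, ‖x i‖ = 1)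
    (heig : Tendsto (fun i => P (x i) - (m : 𝕜) • x i) l (𝓝 0)) {δ : ι → ℝ}
    (hδ : Tendsto δ l (𝓝 0)) (hP : ∀ i, -δ i ≤ re (μ * ⟪P (x i), R (x i)⟫_𝕜)) :
    ∃ δ' : ι → ℝ, Tendsto δ' l (𝓝 0) ∧ ∀ i, -δ' i ≤ re (μ * ⟪x i, R (x i)⟫_𝕜) := by
  refine ⟨fun i => (δ i + ‖μ‖ * ‖P (x i) - (m : 𝕜) • x i‖ * ‖R‖) / m, ?_, fun i => ?_⟩
  · simpa using (hδ.add ((heig.norm.const_mul ‖μ‖).mul_const ‖R‖)).div_const m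
  · rw [neg_le, le_div_iff₀ hm]
    linarith [hP i, re_mul_inner_le_mul_re_add R (hx i) μ (P (x i)) m]

theorem tendsto_re_inner_apply_of_tendsto_sub_smul {ι : Type*} {l : Filter ι} (P : E →L[𝕜] E)
    {μ : ℝ} {x : ι → E} (hx : ∀ i, ‖x i‖ = 1)
    (h : Tendsto (fun i => P (x i) - (μ : 𝕜) • x i) l (𝓝 0)) :
    Tendsto (fun i => re ⟪x i, P (x i)⟫_𝕜) l (𝓝 μ) := by
  have hsplit : ∀ i, re ⟪x i, P (x i)⟫_𝕜 = μ + re ⟪x i, P (x i) - (μ : 𝕜) • x i⟫_𝕜 := by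
    intro i
    rw [inner_sub_right, inner_smul_right, inner_self_eq_norm_sq_to_K, hx i, map_sub,
      re_ofReal_mul]
    simp
  have herr : Tendsto (fun i => re ⟪x i, P (x i) - (μ : 𝕜) • x i⟫_𝕜) l (𝓝 0) := by
    refine squeeze_zero_norm (fun i => ?_) (tendsto_zero_iff_norm_tendsto_zero.1 h)
    calc ‖re ⟪x i, P (x i) - (μ : 𝕜) • x i⟫_𝕜‖ ≤ ‖⟪x i, P (x i) - (μ : 𝕜) • x i⟫_𝕜‖ :=
          norm_re_le_norm _
      _ ≤ ‖P (x i) - (μ : 𝕜) • x i‖ := by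
        simpa [hx i] using norm_inner_le_norm (𝕜 := 𝕜) (x i) (P (x i) - (μ : 𝕜) • x i)
  simpa [hsplit] using herr.const_add μ

theorem le_norm_add_smul_of_tendsto {ι : Type*} {l : Filter ι} [l.NeBot] {S R : E →L[𝕜] E}
    {μ : 𝕜} {x : ι → E} (hx : ∀ i, ‖x i‖ = 1) {σ : ℝ}
    (hS : Tendsto (fun i => re ⟪x i, S (x i)⟫_𝕜) l (𝓝 σ)) {δ : ι → ℝ}
    (hδ : Tendsto δ l (𝓝 0)) (hR : ∀ i, -δ i ≤ re (μ * ⟪x i, R (x i)⟫_𝕜)) :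
    σ ≤ ‖S + μ • R‖ := by
  refine le_of_tendsto' (by simpa using hS.sub hδ) fun i => ?_
  calc re ⟪x i, S (x i)⟫_𝕜 - δ i ≤ re ⟪x i, S (x i)⟫_𝕜 + re (μ * ⟪x i, R (x i)⟫_𝕜) := by
        linarith [hR i]
    _ = re ⟪x i, (S + μ • R) (x i)⟫_𝕜 := by
        simp [inner_add_right, inner_smul_right]
    _ ≤ ‖x i‖ * ‖(S + μ • R) (x i)‖ := re_inner_le_norm (x i) ((S + μ • R) (x i))
    _ ≤ ‖S + μ • R‖ := by simpa [hx i] using (S + μ • R).le_opNorm (x i)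

namespace LinearMap.IsSymmetric

variable {T : E →L[𝕜] E} (hT : (T : E →ₗ[𝕜] E).IsSymmetric)
include hT

theorem norm_sq_apply_sub_smul_sq_le {x : E} (hx : ‖x‖ = 1) :
    ‖(T ^ 2) x - ((‖T‖ ^ 2 : ℝ) : 𝕜) • x‖ ^ 2 ≤ ‖T‖ ^ 4 - ‖(T ^ 2) x‖ ^ 2 := by
  have hTTx : (T ^ 2) x = T (T x) := by rw [sq, mul_apply_eq_comp]
  have hinner : re ⟪(T ^ 2) x, x⟫_𝕜 = ‖T x‖ ^ 2 := by
    rw [hTTx, ← inner_self_eq_norm_sq (𝕜 := 𝕜)]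
    exact congrArg re (hT (T x) x)
  have hbound : ‖(T ^ 2) x‖ ≤ ‖T‖ * ‖T x‖ := hTTx ▸ T.le_opNorm (T x)
  rw [norm_sub_sq (𝕜 := 𝕜), inner_smul_right, re_ofReal_mul, hinner, norm_smul, norm_ofReal, hx,
    abs_of_nonneg (by positivity)]
  nlinarith [norm_nonneg (T x), norm_nonneg T, norm_nonneg ((T ^ 2) x)]

theorem tendsto_sq_apply_sub_smul {ι : Type*} {l : Filter ι} {x : ι → E} (hx : ∀ i, ‖x i‖ = 1)
    (hTx : Tendsto (fun i => ‖(T ^ 2) (x i)‖) l (𝓝 (‖T‖ ^ 2))) :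
    Tendsto (fun i => (T ^ 2) (x i) - ((‖T‖ ^ 2 : ℝ) : 𝕜) • x i) l (𝓝 0) := by
  rw [tendsto_zero_iff_norm_tendsto_zero]
  have hgap : Tendsto (fun i => √(‖T‖ ^ 4 - ‖(T ^ 2) (x i)‖ ^ 2)) l (𝓝 0) := by
    have hlim := ((tendsto_const_nhds (x := ‖T‖ ^ 4)).sub (hTx.pow 2)).sqrt
    rwa [← pow_mul, sub_self, Real.sqrt_zero] at hlim
  refine squeeze_zero (fun _ => norm_nonneg _) (fun i => ?_) hgap
  exact Real.le_sqrt_of_sq_le (hT.norm_sq_apply_sub_smul_sq_le (hx i))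

end LinearMap.IsSymmetric

namespace BirkhoffJamesOrthogonal

variable {S R : E →L[𝕜] E} (h : BirkhoffJamesOrthogonal 𝕜 S R) (hS : S ≠ 0) (μ : 𝕜)
include h hS

/-- Test orthogonality against the scalar `t * μ`: a unit vector almost norming `S + (t * μ) • R`
almost norms `S`, and expanding `‖S x + (t * μ) • R x‖²` bounds `re (μ * ⟪S x, R x⟫)` below. -/
theorem exists_witness {t : ℝ} (ht₀ : 0 < t) (ht₁ : t ≤ 1) :
    ∃ x, ‖x‖ = 1 ∧ ‖S‖ - t * (‖S‖ + ‖μ‖ * ‖R‖) ≤ ‖S x‖ ∧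
      -(t * (‖S‖ ^ 2 + (‖μ‖ * ‖R‖) ^ 2)) ≤ re (μ * ⟪S x, R x⟫_𝕜) := by
  set s := ‖S‖
  set c := ‖μ‖ * ‖R‖
  have hs : 0 < s := norm_pos_iff.2 hS
  have hr₀ : 0 ≤ s * (1 - t ^ 2) := mul_nonneg hs.le (by nlinarith)
  have hrs : s * (1 - t ^ 2) < ‖S + ((t : 𝕜) * μ) • R‖ :=
    lt_of_lt_of_le (by nlinarith [mul_pos hs (pow_pos ht₀ 2)]) (h ((t : 𝕜) * μ))
  obtain ⟨x, hx, hBx⟩ := (S + ((t : 𝕜) * μ) • R).exists_norm_eq_one_lt_norm_apply hr₀ hrs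
  rw [add_apply, smul_apply] at hBx
  have hSx : ‖S x‖ ≤ s := by simpa [hx] using S.le_opNorm x
  have hRx : ‖((t : 𝕜) * μ) • R x‖ ≤ t * c := by
    rw [norm_smul, norm_mul, norm_ofReal, abs_of_pos ht₀, mul_assoc]
    gcongr
    exact mul_le_mul_of_nonneg_left (by simpa [hx] using R.le_opNorm x) (norm_nonneg μ)
  have hexpand := norm_add_sq (𝕜 := 𝕜) (S x) (((t : 𝕜) * μ) • R x)
  rw [inner_smul_right, mul_assoc, re_ofReal_mul] at hexpand
  refine ⟨x, hx, ?_, ?_⟩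
  · nlinarith [norm_add_le (S x) (((t : 𝕜) * μ) • R x)]
  · have hsq : (s * (1 - t ^ 2)) ^ 2 < ‖S x + ((t : 𝕜) * μ) • R x‖ ^ 2 := by gcongr
    have hSx2 : ‖S x‖ ^ 2 ≤ s ^ 2 := by gcongr
    have hRx2 : ‖((t : 𝕜) * μ) • R x‖ ^ 2 ≤ (t * c) ^ 2 := by gcongr
    have hlin : t * (-(t * (2 * s ^ 2 + c ^ 2))) < t * (2 * re (μ * ⟪S x, R x⟫_𝕜)) := by
      nlinarith [pow_pos ht₀ 4, sq_nonneg s]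
    nlinarith [lt_of_mul_lt_mul_left hlin ht₀.le, sq_nonneg c]

theorem exists_witness_seq :
    ∃ x : ℕ → E, (∀ n, ‖x n‖ = 1) ∧ Tendsto (fun n => ‖S (x n)‖) atTop (𝓝 ‖S‖) ∧
      ∃ δ : ℕ → ℝ, Tendsto δ atTop (𝓝 0) ∧ ∀ n, -δ n ≤ re (μ * ⟪S (x n), R (x n)⟫_𝕜) := by
  choose x hx hSx hRx using fun n : ℕ =>
    exists_witness h hS μ (t := 1 / ((n : ℝ) + 1)) (by positivity)
      (div_le_one_of_le₀ (by simp) (by positivity))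
  have ht := tendsto_one_div_add_atTop_nhds_zero_nat (𝕜 := ℝ)
  refine ⟨x, hx, ?_, _, by simpa using ht.mul_const (‖S‖ ^ 2 + (‖μ‖ * ‖R‖) ^ 2), hRx⟩
  refine tendsto_of_tendsto_of_tendsto_of_le_of_le ?_ tendsto_const_nhds hSx
    fun n => by simpa [hx n] using S.le_opNorm (x n)
  simpa using tendsto_const_nhds.sub (ht.mul_const (‖S‖ + ‖μ‖ * ‖R‖))

end BirkhoffJamesOrthogonal

end InnerProduct

/-- For self-adjoint `T`, `T² ⊥_B A` implies `T^{2k} ⊥_B A` for every `k ≥ 1`. -/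
theorem selfAdjoint_even_power_birkhoffJames
    {H : Type*} [NormedAddCommGroup H] [InnerProductSpace ℂ H] [CompleteSpace H]
    (T A : H →L[ℂ] H) (hT : IsSelfAdjoint T)
    (hBJ : ∀ lam : ℂ, ‖T ^ 2 + lam • A‖ ≥ ‖T ^ 2‖) :
    ∀ k : ℕ, 1 ≤ k → ∀ lam : ℂ, ‖T ^ (2 * k) + lam • A‖ ≥ ‖T ^ (2 * k)‖ := by
  intro k hk lam
  rw [pow_mul]
  by_cases hT2 : T ^ 2 = 0
  · simp [hT2, zero_pow (by omega : k ≠ 0)]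
  have hm : ‖T ^ 2‖ = ‖T‖ ^ 2 := by rw [sq T, hT.norm_mul_self]
  have hm₀ : 0 < ‖T‖ ^ 2 := hm ▸ norm_pos_iff.2 hT2
  obtain ⟨x, hx, hTx, δ, hδ, hδle⟩ := BirkhoffJamesOrthogonal.exists_witness_seq hBJ hT2 lam
  rw [hm] at hTx
  have heig := hT.isSymmetric.tendsto_sq_apply_sub_smul hx hTx
  have hdiag : Tendsto (fun n => re ⟪x n, ((T ^ 2) ^ k) (x n)⟫_ℂ) atTop (𝓝 ((‖T‖ ^ 2) ^ k)) :=
    tendsto_re_inner_apply_of_tendsto_sub_smul _ hx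
    (by simpa only [RCLike.ofReal_pow] using (T ^ 2).tendsto_pow_apply_sub_smul heig k)
  obtain ⟨δ', hδ', hA⟩ :=
    exists_lower_bound_re_mul_inner_of_tendsto_sub_smul hm₀ hx heig hδ hδle
  calc ‖(T ^ 2) ^ k‖ ≤ (‖T‖ ^ 2) ^ k := hm ▸ norm_pow_le' _ (by omega)
    _ ≤ ‖(T ^ 2) ^ k + lam • A‖ := le_norm_add_smul_of_tendsto hx hdiag hδ' hA
end

section
/- Let T be a contraction on a Hilbert space H with ‖D_T‖ = 1, where D_T = (I − T*T)^{1/2}. Then for any norming sequence (xₙ) of D_T, ‖Txₙ‖ → 0; consequently D_T^k ⊥_B T^j for all integers k, j ≥ 1. -/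
/-!
Since `D` is self-adjoint, `D * D = 1 - T†T` says `‖D x‖² + ‖T x‖² = ‖x‖²`, so `T` vanishes
asymptotically along every norming sequence `xₙ` of `D`, and hence so does every `T ^ j`, `j ≥ 1`.
Self-adjointness also gives `‖D ^ (m + 1) x‖² = ⟪D ^ m x, D ^ (m + 2) x⟫ ≤ ‖D ^ (m + 2) x‖` on the
unit ball, so `xₙ` is norming for every power `D ^ k`. Testing `D ^ k + λ T ^ j` on `xₙ` then gives
`‖D ^ k + λ T ^ j‖ ≥ 1 ≥ ‖D ^ k‖`.
-/

open Filter Topology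

open ContinuousLinearMap

theorem ContinuousLinearMap.norm_pow_apply_le {𝕜 E : Type*} [NontriviallyNormedField 𝕜]
    [SeminormedAddCommGroup E] [NormedSpace 𝕜 E] {A : E →L[𝕜] E} (hA : ‖A‖ ≤ 1) (k : ℕ)
    (x : E) : ‖(A ^ k) x‖ ≤ ‖x‖ := by
  induction k with
  | zero => rfl
  | succ k ih =>
    rw [pow_succ', mul_apply_eq_comp]
    exact A.le_of_opNorm_le_of_le hA ih |>.trans_eq (one_mul _)

theorem ContinuousLinearMap.exists_norming_sequence {𝕜 E F : Type*} [DenselyNormedField 𝕜]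
    [NormedAddCommGroup E] [NormedSpace 𝕜 E] [NormedAddCommGroup F] [NormedSpace 𝕜 F]
    (A : E →L[𝕜] F) :
    ∃ x : ℕ → E, (∀ n, ‖x n‖ ≤ 1) ∧ Tendsto (fun n => ‖A (x n)‖) atTop (𝓝 ‖A‖) := by
  have h (n : ℕ) : ∃ x : E, ‖x‖ < 1 ∧ ‖A‖ - 1 / (n + 1) < ‖A x‖ :=
    A.exists_lt_apply_of_lt_opNorm (sub_lt_self _ Nat.one_div_pos_of_nat)
  choose x hx hAx using h
  refine ⟨x, fun n => (hx n).le, ?_⟩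
  refine tendsto_of_tendsto_of_tendsto_of_le_of_le ?_ tendsto_const_nhds (fun n => (hAx n).le)
    fun n => A.le_of_opNorm_le_of_le le_rfl (hx n).le |>.trans_eq (mul_one _)
  simpa using tendsto_const_nhds.sub (tendsto_one_div_add_atTop_nhds_zero_nat (𝕜 := ℝ))

theorem ContinuousLinearMap.le_norm_add_smul_of_tendsto {𝕜 E F : Type*}
    [NontriviallyNormedField 𝕜] [SeminormedAddCommGroup E] [NormedSpace 𝕜 E]
    [SeminormedAddCommGroup F] [NormedSpace 𝕜 F]
    {A B : E →L[𝕜] F} {x : ℕ → E} (hx : ∀ n, ‖x n‖ ≤ 1) {a : ℝ}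
    (hA : Tendsto (fun n => ‖A (x n)‖) atTop (𝓝 a))
    (hB : Tendsto (fun n => ‖B (x n)‖) atTop (𝓝 0)) (c : 𝕜) :
    a ≤ ‖A + c • B‖ := by
  have hlim : Tendsto (fun n => ‖A (x n)‖ - ‖c‖ * ‖B (x n)‖) atTop (𝓝 a) := by
    simpa using hA.sub (hB.const_mul ‖c‖)
  refine le_of_tendsto' hlim fun n => ?_
  calc ‖A (x n)‖ - ‖c‖ * ‖B (x n)‖ ≤ ‖(A + c • B) (x n)‖ := by
        rw [sub_le_iff_le_add, ← norm_smul, add_apply, smul_apply]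
        exact norm_le_add_norm_add (A (x n)) (c • B (x n))
    _ ≤ ‖A + c • B‖ := (A + c • B).le_of_opNorm_le_of_le le_rfl (hx n) |>.trans_eq (mul_one _)

theorem ContinuousLinearMap.tendsto_norm_comp_apply_zero {𝕜 E F G : Type*}
    [NontriviallyNormedField 𝕜] [SeminormedAddCommGroup E] [NormedSpace 𝕜 E]
    [SeminormedAddCommGroup F] [NormedSpace 𝕜 F] [SeminormedAddCommGroup G] [NormedSpace 𝕜 G]
    (C : F →L[𝕜] G) {B : E →L[𝕜] F} {x : ℕ → E}
    (hB : Tendsto (fun n => ‖B (x n)‖) atTop (𝓝 0)) :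
    Tendsto (fun n => ‖(C ∘L B) (x n)‖) atTop (𝓝 0) :=
  squeeze_zero (fun _ => norm_nonneg _) (fun n => C.le_opNorm (B (x n)))
    (by simpa using hB.const_mul ‖C‖)

section InnerProductSpace

variable {𝕜 E F : Type*} [RCLike 𝕜] [NormedAddCommGroup E] [InnerProductSpace 𝕜 E]
  [CompleteSpace E] [NormedAddCommGroup F] [InnerProductSpace 𝕜 F] [CompleteSpace F]

theorem IsSelfAdjoint.norm_pow_succ_apply_sq_le {D : E →L[𝕜] E} (hD : IsSelfAdjoint D)
    (hD1 : ‖D‖ ≤ 1) {x : E} (hx : ‖x‖ ≤ 1) (k : ℕ) :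
    ‖(D ^ (k + 1)) x‖ ^ 2 ≤ ‖(D ^ (k + 2)) x‖ := by
  have hinner : inner 𝕜 ((D ^ (k + 1)) x) ((D ^ (k + 1)) x) =
      inner 𝕜 ((D ^ k) x) ((D ^ (k + 2)) x) := by
    simpa only [coe_coe, ← mul_apply_eq_comp, ← pow_succ'] using
      hD.isSymmetric ((D ^ k) x) ((D ^ (k + 1)) x)
  calc ‖(D ^ (k + 1)) x‖ ^ 2 = RCLike.re (inner 𝕜 ((D ^ k) x) ((D ^ (k + 2)) x)) := by
        rw [← hinner, inner_self_eq_norm_sq]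
    _ ≤ ‖(D ^ k) x‖ * ‖(D ^ (k + 2)) x‖ := re_inner_le_norm _ _
    _ ≤ ‖(D ^ (k + 2)) x‖ :=
        mul_le_of_le_one_left (norm_nonneg _) ((D.norm_pow_apply_le hD1 k x).trans hx)

theorem IsSelfAdjoint.tendsto_norm_pow_apply_one {D : E →L[𝕜] E} (hD : IsSelfAdjoint D)
    (hD1 : ‖D‖ ≤ 1) {x : ℕ → E} (hx : ∀ n, ‖x n‖ ≤ 1)
    (hDx : Tendsto (fun n => ‖D (x n)‖) atTop (𝓝 1)) {k : ℕ} (hk : 1 ≤ k) :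
    Tendsto (fun n => ‖(D ^ k) (x n)‖) atTop (𝓝 1) := by
  obtain ⟨m, rfl⟩ := Nat.exists_eq_add_of_le' hk
  induction m with
  | zero => simpa using hDx
  | succ m ih =>
    refine tendsto_of_tendsto_of_tendsto_of_le_of_le (by simpa using (ih le_add_self).pow 2)
      tendsto_const_nhds (fun n => hD.norm_pow_succ_apply_sq_le hD1 (hx n) m)
      fun n => (D.norm_pow_apply_le hD1 _ _).trans (hx n)

theorem norm_sq_add_norm_sq_eq_of_mul_self_eq {D : E →L[𝕜] E} {T : E →L[𝕜] F}
    (hD : IsSelfAdjoint D) (hD2 : D * D = 1 - adjoint T ∘L T) (x : E) :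
    ‖D x‖ ^ 2 + ‖T x‖ ^ 2 = ‖x‖ ^ 2 := by
  rw [D.apply_norm_sq_eq_inner_adjoint_left, T.apply_norm_sq_eq_inner_adjoint_left, hD.adjoint_eq]
  rw [← mul_def, hD2, sub_apply, one_apply_eq_self, inner_sub_left, map_sub,
    inner_self_eq_norm_sq]
  ring

theorem tendsto_norm_apply_zero_of_mul_self_eq {D : E →L[𝕜] E} {T : E →L[𝕜] F}
    (hD : IsSelfAdjoint D) (hD2 : D * D = 1 - adjoint T ∘L T) {x : ℕ → E}
    (hx : ∀ n, ‖x n‖ ≤ 1) (hDx : Tendsto (fun n => ‖D (x n)‖) atTop (𝓝 1)) :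
    Tendsto (fun n => ‖T (x n)‖) atTop (𝓝 0) := by
  have hbound : Tendsto (fun n => √(1 - ‖D (x n)‖ ^ 2)) atTop (𝓝 0) := by
    simpa using ((hDx.pow 2).const_sub 1).sqrt
  refine squeeze_zero (fun _ => norm_nonneg _) (fun n => Real.le_sqrt_of_sq_le ?_) hbound
  have := norm_sq_add_norm_sq_eq_of_mul_self_eq hD hD2 (x n)
  nlinarith [hx n, norm_nonneg (x n)]

end InnerProductSpace

theorem defect_orthogonal_to_powers_general
    {H : Type*} [NormedAddCommGroup H] [InnerProductSpace ℂ H] [CompleteSpace H]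
    (T D : H →L[ℂ] H)
    (hDpos : D.IsPositive)
    (hD2 : D * D = 1 - ContinuousLinearMap.adjoint T * T)
    (hDnorm : ‖D‖ = 1) :
    (∀ x : ℕ → H, (∀ n, ‖x n‖ = 1) →
        Tendsto (fun n => ‖D (x n)‖) atTop (𝓝 ‖D‖) →
        Tendsto (fun n => ‖T (x n)‖) atTop (𝓝 0)) ∧
    (∀ k j : ℕ, 1 ≤ k → 1 ≤ j →
        ∀ lam : ℂ, ‖D ^ k + lam • T ^ j‖ ≥ ‖D ^ k‖) := by
  have hD : IsSelfAdjoint D := hDpos.isSelfAdjoint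
  refine ⟨fun x hx hDx => tendsto_norm_apply_zero_of_mul_self_eq hD hD2 (fun n => (hx n).le)
    (hDnorm ▸ hDx), fun k j hk hj lam => ?_⟩
  obtain ⟨x, hx, hDx⟩ := D.exists_norming_sequence
  rw [hDnorm] at hDx
  have hTx : Tendsto (fun n => ‖T (x n)‖) atTop (𝓝 0) :=
    tendsto_norm_apply_zero_of_mul_self_eq hD hD2 hx hDx
  obtain ⟨i, rfl⟩ := Nat.exists_eq_add_of_le' hj
  calc ‖D ^ k‖ ≤ 1 := (norm_pow_le' D hk).trans (by rw [hDnorm, one_pow])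
    _ ≤ ‖D ^ k + lam • T ^ (i + 1)‖ :=
      le_norm_add_smul_of_tendsto hx (hD.tendsto_norm_pow_apply_one hDnorm.le hx hDx hk)
        (by rw [pow_succ]; exact (T ^ i).tendsto_norm_comp_apply_zero hTx) lam

/-- If `T` is a contraction with defect operator `D_T` of norm one, then every norming
sequence of `D_T` satisfies `‖T xₙ‖ → 0`, and `D_T^k ⊥_B T^j` for all `k, j ≥ 1`. -/
theorem defect_orthogonal_to_powers
    {H : Type*} [NormedAddCommGroup H] [InnerProductSpace ℂ H] [CompleteSpace H]
    (T D : H →L[ℂ] H) (hT : ‖T‖ ≤ 1)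
    (hDpos : D.IsPositive)
    (hD2 : D * D = 1 - ContinuousLinearMap.adjoint T * T)
    (hDnorm : ‖D‖ = 1) :
    (∀ x : ℕ → H, (∀ n, ‖x n‖ = 1) →
        Tendsto (fun n => ‖D (x n)‖) atTop (𝓝 ‖D‖) →
        Tendsto (fun n => ‖T (x n)‖) atTop (𝓝 0)) ∧
    (∀ k j : ℕ, 1 ≤ k → 1 ≤ j →
        ∀ lam : ℂ, ‖D ^ k + lam • T ^ j‖ ≥ ‖D ^ k‖) :=
  defect_orthogonal_to_powers_general T D hDpos hD2 hDnorm
end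

section
/- Let ρ > 0 and let T, A be operators on a Hilbert space H admitting unitary ρ-dilations U_T, U_A on a common Hilbert space K ⊇ H. If ‖T‖ = ρ and T ⊥_B A, then U_T ⊥_B U_A. -/
/-!
A unitary has norm at most one, and compressing an operator to a closed subspace does not
increase its norm. Since `T + λA = ρ · P_H (U_T + λU_A)|_H`, this gives
`ρ = ‖T‖ ≤ ‖T + λA‖ ≤ ρ ‖U_T + λU_A‖`, hence `‖U_T‖ ≤ 1 ≤ ‖U_T + λU_A‖`.
-/

open ContinuousLinearMap

theorem ContinuousLinearMap.norm_le_of_eq_smul_orthogonalProjectionOnto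
    {𝕜 K : Type*} [RCLike 𝕜] [NormedAddCommGroup K] [InnerProductSpace 𝕜 K]
    (p : Submodule 𝕜 K) [p.HasOrthogonalProjection]
    (S : p →L[𝕜] p) (V : K →L[𝕜] K) (c : 𝕜)
    (hS : ∀ x : p, S x = c • p.orthogonalProjectionOnto (V x)) :
    ‖S‖ ≤ ‖c‖ * ‖V‖ := by
  refine S.opNorm_le_bound (by positivity) fun x => ?_
  calc ‖S x‖ = ‖c‖ * ‖p.orthogonalProjectionOnto (V x)‖ := by rw [hS, norm_smul]
    _ ≤ ‖c‖ * ‖V x‖ := by gcongr; exact p.norm_orthogonalProjectionOnto_apply_le _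
    _ ≤ ‖c‖ * (‖V‖ * ‖x‖) := by gcongr; exact V.le_opNorm _
    _ = ‖c‖ * ‖V‖ * ‖x‖ := by ring

theorem ContinuousLinearMap.norm_le_one_of_mem_unitary
    {𝕜 K : Type*} [RCLike 𝕜] [NormedAddCommGroup K] [InnerProductSpace 𝕜 K] [CompleteSpace K]
    {U : K →L[𝕜] K} (hU : U ∈ unitary (K →L[𝕜] K)) : ‖U‖ ≤ 1 :=
  U.opNorm_le_bound zero_le_one fun x => by rw [one_mul, U.norm_map_of_mem_unitary hU]

theorem birkhoffJames_of_rho_dilations_general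
    {K : Type*} [NormedAddCommGroup K] [InnerProductSpace ℂ K] [CompleteSpace K]
    (p : Submodule ℂ K) [CompleteSpace p]
    (ρ : ℝ) (hρ : 0 < ρ)
    (T A : p →L[ℂ] p) (UT UA : K →L[ℂ] K)
    (hUT : UT ∈ unitary (K →L[ℂ] K))
    (hdilT : ∀ x : p, T x = (ρ : ℂ) • p.orthogonalProjection (UT (x : K)))
    (hdilA : ∀ x : p, A x = (ρ : ℂ) • p.orthogonalProjection (UA (x : K)))
    (hTnorm : ‖T‖ = ρ)
    (hBJ : ∀ lam : ℂ, ‖T + lam • A‖ ≥ ‖T‖) :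
    ∀ lam : ℂ, ‖UT + lam • UA‖ ≥ ‖UT‖ := by
  intro lam
  have hdil : ∀ x : p, (T + lam • A) x
      = (ρ : ℂ) • p.orthogonalProjectionOnto ((UT + lam • UA) (x : K)) := fun x => by
    simp only [add_apply, smul_apply, hdilT, hdilA, map_add, map_smul]
    module
  have hcomp : ‖T + lam • A‖ ≤ ρ * ‖UT + lam • UA‖ := by
    have := norm_le_of_eq_smul_orthogonalProjectionOnto p _ _ _ hdil
    rwa [Complex.norm_real, Real.norm_of_nonneg hρ.le] at this
  have hone : 1 ≤ ‖UT + lam • UA‖ := by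
    have : ρ * 1 ≤ ρ * ‖UT + lam • UA‖ := by linarith [hBJ lam]
    exact le_of_mul_le_mul_left this hρ
  linarith [norm_le_one_of_mem_unitary hUT]

/-- If `T ⊥_B A` and `‖T‖ = ρ`, then any unitary `ρ`-dilations of `T` and `A` acting on a
common space are Birkhoff-James orthogonal. -/
theorem birkhoffJames_of_rho_dilations
    {K : Type*} [NormedAddCommGroup K] [InnerProductSpace ℂ K] [CompleteSpace K]
    (p : Submodule ℂ K) [CompleteSpace p]
    (ρ : ℝ) (hρ : 0 < ρ)
    (T A : p →L[ℂ] p) (UT UA : K →L[ℂ] K)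
    (hUT : UT ∈ unitary (K →L[ℂ] K)) (hUA : UA ∈ unitary (K →L[ℂ] K))
    (hdilT : ∀ x : p, T x = (ρ : ℂ) • p.orthogonalProjection (UT (x : K)))
    (hdilA : ∀ x : p, A x = (ρ : ℂ) • p.orthogonalProjection (UA (x : K)))
    (hTnorm : ‖T‖ = ρ)
    (hBJ : ∀ lam : ℂ, ‖T + lam • A‖ ≥ ‖T‖) :
    ∀ lam : ℂ, ‖UT + lam • UA‖ ≥ ‖UT‖ :=
  birkhoffJames_of_rho_dilations_general p ρ hρ T A UT UA hUT hdilT hdilA hTnorm hBJ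
end

section
/- Let T and A be contractions on a Hilbert space H with ‖T‖ = 1, and suppose V_T, V_A are isometric dilations of T and A respectively on a common Hilbert space K ⊇ H (i.e., T = P_H V_T|_H and A = P_H V_A|_H with V_T, V_A isometries). If T ⊥_B A then V_T ⊥_B V_A. -/
/-! Compressing an operator on `K` to a closed subspace `H` does not increase its norm, and
compression is linear. Hence `‖T + λA‖`, the norm of the compression of `V_T + λV_A`, is at most
`‖V_T + λV_A‖`, while `‖V_T‖ ≤ 1 = ‖T‖` since `V_T` is an isometry. -/

namespace ContinuousLinearMap

variable {𝕜 E : Type*} [RCLike 𝕜] [NormedAddCommGroup E] [InnerProductSpace 𝕜 E]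
  {p : Submodule 𝕜 E} [p.HasOrthogonalProjection]

def IsCompression (C : p →L[𝕜] p) (S : E →L[𝕜] E) : Prop :=
  ∀ x : p, C x = p.orthogonalProjectionOnto (S x)

namespace IsCompression

variable {C D : p →L[𝕜] p} {S R : E →L[𝕜] E}

theorem add (hC : IsCompression C S) (hD : IsCompression D R) : IsCompression (C + D) (S + R) :=
  fun x => by simp only [add_apply, hC x, hD x, map_add]

theorem smul (hC : IsCompression C S) (c : 𝕜) : IsCompression (c • C) (c • S) :=
  fun x => by simp only [smul_apply, hC x, map_smul]

theorem norm_le (hC : IsCompression C S) : ‖C‖ ≤ ‖S‖ :=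
  opNorm_le_bound _ (norm_nonneg _) fun x => calc
    ‖C x‖ = ‖p.orthogonalProjectionOnto (S x)‖ := by rw [hC x]
    _ ≤ ‖S x‖ := p.norm_orthogonalProjectionOnto_apply_le _
    _ ≤ ‖S‖ * ‖x‖ := S.le_opNorm _

end IsCompression

end ContinuousLinearMap

theorem ContinuousLinearMap.norm_le_one_of_forall_norm_map_eq {𝕜 E : Type*} [RCLike 𝕜]
    [NormedAddCommGroup E] [NormedSpace 𝕜 E] {V : E →L[𝕜] E} (hV : ∀ y, ‖V y‖ = ‖y‖) :
    ‖V‖ ≤ 1 :=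
  opNorm_le_bound _ zero_le_one fun y => (hV y).trans_le (one_mul _).ge

open ContinuousLinearMap in
theorem birkhoffJames_of_isometric_dilations_general
    {K : Type*} [NormedAddCommGroup K] [InnerProductSpace ℂ K]
    (p : Submodule ℂ K) [CompleteSpace p]
    (T A : p →L[ℂ] p) (VT VA : K →L[ℂ] K)
    (hVT : ∀ y : K, ‖VT y‖ = ‖y‖)
    (hdilT : ∀ x : p, T x = p.orthogonalProjection (VT (x : K)))
    (hdilA : ∀ x : p, A x = p.orthogonalProjection (VA (x : K)))
    (hTnorm : ‖T‖ = 1)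
    (hBJ : ∀ lam : ℂ, ‖T + lam • A‖ ≥ ‖T‖) :
    ∀ lam : ℂ, ‖VT + lam • VA‖ ≥ ‖VT‖ := by
  intro lam
  have hcomp : IsCompression (T + lam • A) (VT + lam • VA) :=
    IsCompression.add hdilT (IsCompression.smul hdilA lam)
  calc ‖VT‖ ≤ 1 := norm_le_one_of_forall_norm_map_eq hVT
    _ = ‖T‖ := hTnorm.symm
    _ ≤ ‖T + lam • A‖ := hBJ lam
    _ ≤ ‖VT + lam • VA‖ := hcomp.norm_le

/-- If `T ⊥_B A` for contractions with `‖T‖ = 1`, then isometric dilations of `T` and `A`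
on a common space are Birkhoff-James orthogonal. -/
theorem birkhoffJames_of_isometric_dilations
    {K : Type*} [NormedAddCommGroup K] [InnerProductSpace ℂ K] [CompleteSpace K]
    (p : Submodule ℂ K) [CompleteSpace p]
    (T A : p →L[ℂ] p) (VT VA : K →L[ℂ] K)
    (hTc : ‖T‖ ≤ 1) (hAc : ‖A‖ ≤ 1)
    (hVT : ∀ y : K, ‖VT y‖ = ‖y‖) (hVA : ∀ y : K, ‖VA y‖ = ‖y‖)
    (hdilT : ∀ x : p, T x = p.orthogonalProjection (VT (x : K)))
    (hdilA : ∀ x : p, A x = p.orthogonalProjection (VA (x : K)))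
    (hTnorm : ‖T‖ = 1)
    (hBJ : ∀ lam : ℂ, ‖T + lam • A‖ ≥ ‖T‖) :
    ∀ lam : ℂ, ‖VT + lam • VA‖ ≥ ‖VT‖ :=
  birkhoffJames_of_isometric_dilations_general p T A VT VA hVT hdilT hdilA hTnorm hBJ
end

section
/- Let T be a contraction on a Hilbert space H. The 2×2 Halmos block operator on H ⊕ H given by the matrix [[D_T, −T*],[T, D_{T*}]] is a unitary operator, where D_T = (I − T*T)^{1/2} and D_{T*} = (I − TT*)^{1/2}. -/
/-!
The heart of the matter is the intertwining relation `T D_T = D_{T*} T`. Since `T` intertwines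
`1 - T*T` and `1 - TT*`, it intertwines every continuous function of them (by Stone–Weierstrass,
on a compact set containing both spectra), in particular their square roots. With it, the entries
of `U*U` and `UU*` for the Halmos block `U` reduce to `D_T² + T*T = 1`, `TT* + D_{T*}² = 1` and
`D_T T* = T* D_{T*}`, so `U` is an isometry with a right inverse `U*`.
-/

open ContinuousLinearMap
open scoped InnerProductSpace

section Intertwining

variable {𝕜 A : Type*} {p : A → Prop} [RCLike 𝕜] [Ring A] [StarRing A] [Algebra 𝕜 A]
  [TopologicalSpace A] [ContinuousFunctionalCalculus 𝕜 A p] [IsTopologicalRing A] [T2Space A]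

theorem SemiconjBy.cfcHomSuperset {a b x : A} (ha : p a) (hb : p b) {s : Set 𝕜}
    [CompactSpace s] (has : spectrum 𝕜 a ⊆ s) (hbs : spectrum 𝕜 b ⊆ s)
    (h : SemiconjBy x a b) (h_star : SemiconjBy x (star a) (star b)) (f : C(s, 𝕜)) :
    SemiconjBy x (cfcHomSuperset ha has f) (cfcHomSuperset hb hbs f) := by
  induction f using ContinuousMap.induction_on_of_compact with
  | const r =>
    have : ContinuousMap.const s r = algebraMap 𝕜 C(s, 𝕜) r := rfl
    simp only [this, AlgHomClass.commutes]
    exact (Algebra.commute_algebraMap_left r x).symm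
  | id => simpa only [cfcHomSuperset_id] using h
  | star_id => simpa only [map_star, cfcHomSuperset_id] using h_star
  | add f g hf hg => simpa only [map_add] using hf.add_right hg
  | mul f g hf hg => simpa only [map_mul] using hf.mul_right hg
  | frequently f hf =>
    have hclosed : IsClosed {g : C(s, 𝕜) |
        x * _root_.cfcHomSuperset ha has g = _root_.cfcHomSuperset hb hbs g * x} :=
      isClosed_eq ((cfcHomSuperset_continuous ha has).const_mul x)
        ((cfcHomSuperset_continuous hb hbs).mul_const x)
    exact hclosed.closure_subset (mem_closure_of_frequently_of_tendsto hf Filter.tendsto_id)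

theorem SemiconjBy.cfc {a b x : A} (h : SemiconjBy x a b)
    (h_star : SemiconjBy x (star a) (star b)) (f : 𝕜 → 𝕜)
    (hf : ContinuousOn f (spectrum 𝕜 a ∪ spectrum 𝕜 b) := by cfc_cont_tac)
    (ha : p a := by cfc_tac) (hb : p b := by cfc_tac) :
    SemiconjBy x (cfc f a) (cfc f b) := by
  have : CompactSpace ↥(spectrum 𝕜 a ∪ spectrum 𝕜 b) := isCompact_iff_compactSpace.mp
    ((ContinuousFunctionalCalculus.isCompact_spectrum a).union
      (ContinuousFunctionalCalculus.isCompact_spectrum b))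
  have key := h.cfcHomSuperset ha hb Set.subset_union_left Set.subset_union_right h_star
    ⟨_, hf.domRestrict⟩
  rw [cfc_apply f a ha (hf.mono Set.subset_union_left),
    cfc_apply f b hb (hf.mono Set.subset_union_right)]
  exact key

end Intertwining

section CStar

variable {A : Type*} [CStarAlgebra A] [PartialOrder A] [StarOrderedRing A]

theorem SemiconjBy.cfcSqrt {a b x : A} (h : SemiconjBy x a b) (ha : 0 ≤ a) (hb : 0 ≤ b) :
    SemiconjBy x (CFC.sqrt a) (CFC.sqrt b) := by
  rw [CFC.sqrt_eq_real_sqrt a, CFC.sqrt_eq_real_sqrt b, cfcₙ_eq_cfc, cfcₙ_eq_cfc]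
  exact h.cfc (by rwa [ha.isSelfAdjoint.star_eq, hb.isSelfAdjoint.star_eq]) Real.sqrt

theorem mul_defect_eq_defect_mul {t d d' : A} (hd : 0 ≤ d) (hd2 : d * d = 1 - star t * t)
    (hd' : 0 ≤ d') (hd'2 : d' * d' = 1 - t * star t) : t * d = d' * t := by
  have h : SemiconjBy t (1 - star t * t) (1 - t * star t) := by
    simp only [SemiconjBy]; noncomm_ring
  rw [← CFC.sqrt_unique hd2, ← CFC.sqrt_unique hd'2]
  exact h.cfcSqrt (hd2 ▸ hd.isSelfAdjoint.mul_self_nonneg)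
    (hd'2 ▸ hd'.isSelfAdjoint.mul_self_nonneg)

end CStar

section Block

variable {𝕜 E₁ E₂ F₁ F₂ : Type*} [RCLike 𝕜]
  [NormedAddCommGroup E₁] [InnerProductSpace 𝕜 E₁] [CompleteSpace E₁]
  [NormedAddCommGroup E₂] [InnerProductSpace 𝕜 E₂] [CompleteSpace E₂]
  [NormedAddCommGroup F₁] [InnerProductSpace 𝕜 F₁] [CompleteSpace F₁]
  [NormedAddCommGroup F₂] [InnerProductSpace 𝕜 F₂] [CompleteSpace F₂]

theorem ContinuousLinearMap.norm_sq_add_norm_sq_of_adjoint_comp_add {A : E₁ →L[𝕜] F₁}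
    {C : E₁ →L[𝕜] F₂} (h : adjoint A ∘L A + adjoint C ∘L C = .id 𝕜 E₁) (x : E₁) :
    ‖A x‖ ^ 2 + ‖C x‖ ^ 2 = ‖x‖ ^ 2 := by
  rw [apply_norm_sq_eq_inner_adjoint_left, apply_norm_sq_eq_inner_adjoint_left, ← map_add,
    ← inner_add_left, ← add_apply, h, id_apply, ← inner_self_eq_norm_sq (𝕜 := 𝕜)]

theorem ContinuousLinearMap.norm_sq_add_norm_sq_of_block_isometry {A : E₁ →L[𝕜] F₁}
    {B : E₂ →L[𝕜] F₁} {C : E₁ →L[𝕜] F₂} {D : E₂ →L[𝕜] F₂}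
    (hAC : adjoint A ∘L A + adjoint C ∘L C = .id 𝕜 E₁)
    (hBD : adjoint B ∘L B + adjoint D ∘L D = .id 𝕜 E₂)
    (h_orth : adjoint A ∘L B + adjoint C ∘L D = 0) (x : E₁) (y : E₂) :
    ‖A x + B y‖ ^ 2 + ‖C x + D y‖ ^ 2 = ‖x‖ ^ 2 + ‖y‖ ^ 2 := by
  have h_cross : ⟪A x, B y⟫_𝕜 + ⟪C x, D y⟫_𝕜 = 0 := by
    rw [← adjoint_inner_right, ← adjoint_inner_right, ← inner_add_right]
    simpa using congrArg (fun L : E₂ →L[𝕜] E₁ => ⟪x, L y⟫_𝕜) h_orth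
  have h_re := congrArg RCLike.re h_cross
  rw [map_add, map_zero] at h_re
  rw [norm_add_sq (𝕜 := 𝕜), norm_add_sq (𝕜 := 𝕜),
    ← norm_sq_add_norm_sq_of_adjoint_comp_add hAC x,
    ← norm_sq_add_norm_sq_of_adjoint_comp_add hBD y]
  linear_combination 2 * h_re

theorem ContinuousLinearMap.surjective_of_block_coisometry {A : E₁ →L[𝕜] F₁}
    {B : E₂ →L[𝕜] F₁} {C : E₁ →L[𝕜] F₂} {D : E₂ →L[𝕜] F₂}
    (hAB : A ∘L adjoint A + B ∘L adjoint B = .id 𝕜 F₁)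
    (hCD : C ∘L adjoint C + D ∘L adjoint D = .id 𝕜 F₂)
    (h_orth : A ∘L adjoint C + B ∘L adjoint D = 0) :
    Function.Surjective fun q : E₁ × E₂ => (A q.1 + B q.2, C q.1 + D q.2) := by
  have h_orth' : C ∘L adjoint A + D ∘L adjoint B = 0 := by
    simpa [adjoint_comp] using congrArg adjoint h_orth
  rintro ⟨u, v⟩
  refine ⟨(adjoint A u + adjoint C v, adjoint B u + adjoint D v), ?_⟩
  have h₁ := congrArg (· u) hAB
  have h₂ := congrArg (· v) h_orth
  have h₃ := congrArg (· u) h_orth'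
  have h₄ := congrArg (· v) hCD
  simp only [add_apply, comp_apply, id_apply, zero_apply] at h₁ h₂ h₃ h₄
  ext
  · simp only [map_add]
    rw [add_add_add_comm, h₁, h₂, add_zero]
  · simp only [map_add]
    rw [add_add_add_comm, h₃, h₄, zero_add]

end Block

theorem halmos_block_unitary_general
    {H : Type*} [NormedAddCommGroup H] [InnerProductSpace ℂ H] [CompleteSpace H]
    (T D D' : H →L[ℂ] H)
    (hDpos : D.IsPositive)
    (hD2 : D * D = 1 - ContinuousLinearMap.adjoint T * T)
    (hD'pos : D'.IsPositive)
    (hD'2 : D' * D' = 1 - T * ContinuousLinearMap.adjoint T) :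
    (∀ x y : H,
      ‖D x - ContinuousLinearMap.adjoint T y‖ ^ 2 + ‖T x + D' y‖ ^ 2
        = ‖x‖ ^ 2 + ‖y‖ ^ 2) ∧
    Function.Surjective
      (fun q : H × H =>
        (D q.1 - ContinuousLinearMap.adjoint T q.2, T q.1 + D' q.2)) := by
  have hTD : T * D = D' * T :=
    mul_defect_eq_defect_mul ((nonneg_iff_isPositive D).mpr hDpos) hD2
      ((nonneg_iff_isPositive D').mpr hD'pos) hD'2
  have hDsa := hDpos.isSelfAdjoint
  have hD'sa := hD'pos.isSelfAdjoint
  have hDT : D * adjoint T = adjoint T * D' := by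
    simpa [star_mul, hDsa.star_eq, hD'sa.star_eq, star_eq_adjoint] using congrArg star hTD
  have hD : D * D + adjoint T * T = 1 := by rw [hD2, sub_add_cancel]
  have hD' : T * adjoint T + D' * D' = 1 := by rw [hD'2, add_sub_cancel]
  constructor
  · intro x y
    have := norm_sq_add_norm_sq_of_block_isometry (A := D) (B := -adjoint T) (C := T) (D := D')
      (by simpa [hDsa.adjoint_eq, ← mul_def, ← one_def] using hD)
      (by simpa [hD'sa.adjoint_eq, ← mul_def, ← one_def] using hD')
      (by simp [hDsa.adjoint_eq, ← mul_def, hDT]) x y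
    simpa [sub_eq_add_neg] using this
  · have := surjective_of_block_coisometry (A := D) (B := -adjoint T) (C := T) (D := D')
      (by simpa [hDsa.adjoint_eq, ← mul_def, ← one_def] using hD)
      (by simpa [hD'sa.adjoint_eq, ← mul_def, ← one_def] using hD')
      (by simp [hD'sa.adjoint_eq, ← mul_def, hDT])
    simpa [sub_eq_add_neg] using this

/-- The Halmos block `[[D_T, -T*],[T, D_{T*}]]` of a contraction `T` is a unitary on
`H ⊕ H`: it preserves the Hilbert norm of `H ⊕ H` and is surjective. -/
theorem halmos_block_unitary
    {H : Type*} [NormedAddCommGroup H] [InnerProductSpace ℂ H] [CompleteSpace H]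
    (T D D' : H →L[ℂ] H) (hT : ‖T‖ ≤ 1)
    (hDpos : D.IsPositive)
    (hD2 : D * D = 1 - ContinuousLinearMap.adjoint T * T)
    (hD'pos : D'.IsPositive)
    (hD'2 : D' * D' = 1 - T * ContinuousLinearMap.adjoint T) :
    (∀ x y : H,
      ‖D x - ContinuousLinearMap.adjoint T y‖ ^ 2 + ‖T x + D' y‖ ^ 2
        = ‖x‖ ^ 2 + ‖y‖ ^ 2) ∧
    Function.Surjective
      (fun q : H × H =>
        (D q.1 - ContinuousLinearMap.adjoint T q.2, T q.1 + D' q.2)) :=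
  halmos_block_unitary_general T D D' hDpos hD2 hD'pos hD'2
end

section
/- If there exists a sequence of unit vectors (xₙ) in a complex Hilbert space H with ‖Txₙ‖ → ‖T‖ and lim |⟨Txₙ, Axₙ⟩| ≤ ε‖T‖‖A‖ (the limit existing), then for every scalar λ, ‖T + λA‖² ≥ ‖T‖² − 2ε‖T‖‖λA‖, i.e., T ⊥_B^ε A. -/
/-!
For a unit vector `x`, expanding `‖(T + λA)x‖²` and dropping `‖λAx‖²` gives
`‖T + λA‖² ≥ ‖Tx‖² - 2‖λ‖‖⟪Tx, Ax⟫‖`. Along the sequence the right-hand side tends to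
`‖T‖² - 2‖λ‖c`, and `c ≤ ε‖T‖‖A‖` finishes the argument.
-/

open Filter Topology

section

variable {𝕜 E F : Type*} [RCLike 𝕜]

theorem norm_sq_sub_two_norm_inner_le_norm_add_sq [SeminormedAddCommGroup E]
    [InnerProductSpace 𝕜 E] (u w : E) :
    ‖u‖ ^ 2 - 2 * ‖(inner 𝕜 u w : 𝕜)‖ ≤ ‖u + w‖ ^ 2 := by
  have hre : -‖(inner 𝕜 u w : 𝕜)‖ ≤ RCLike.re (inner 𝕜 u w : 𝕜) :=
    neg_le_of_abs_le (RCLike.abs_re_le_norm _)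
  rw [norm_add_sq (𝕜 := 𝕜)]
  nlinarith [sq_nonneg ‖w‖]

theorem ContinuousLinearMap.norm_sq_sub_le_norm_add_smul_sq
    [SeminormedAddCommGroup E] [NormedSpace 𝕜 E]
    [SeminormedAddCommGroup F] [InnerProductSpace 𝕜 F]
    (T A : E →L[𝕜] F) (lam : 𝕜) {x : E} (hx : ‖x‖ ≤ 1) :
    ‖T x‖ ^ 2 - 2 * ‖lam‖ * ‖(inner 𝕜 (T x) (A x) : 𝕜)‖ ≤ ‖T + lam • A‖ ^ 2 :=
  calc ‖T x‖ ^ 2 - 2 * ‖lam‖ * ‖(inner 𝕜 (T x) (A x) : 𝕜)‖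
      = ‖T x‖ ^ 2 - 2 * ‖(inner 𝕜 (T x) (lam • A x) : 𝕜)‖ := by
        rw [inner_smul_right, norm_mul, mul_assoc]
    _ ≤ ‖T x + lam • A x‖ ^ 2 := norm_sq_sub_two_norm_inner_le_norm_add_sq _ _
    _ ≤ ‖T + lam • A‖ ^ 2 := by
        gcongr
        exact (T + lam • A).unit_le_opNorm x hx

end

theorem approx_birkhoffJames_of_sequence_general
    {H : Type*} [NormedAddCommGroup H] [InnerProductSpace ℂ H]
    (T A : H →L[ℂ] H) (ε : ℝ)
    (x : ℕ → H) (hx : ∀ n, ‖x n‖ = 1)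
    (hnorm : Tendsto (fun n => ‖T (x n)‖) atTop (𝓝 ‖T‖))
    (c : ℝ)
    (hc : Tendsto (fun n => ‖(inner ℂ (T (x n)) (A (x n)) : ℂ)‖) atTop (𝓝 c))
    (hcle : c ≤ ε * ‖T‖ * ‖A‖) :
    ∀ lam : ℂ, ‖T + lam • A‖ ^ 2 ≥ ‖T‖ ^ 2 - 2 * ε * ‖T‖ * ‖lam • A‖ := by
  intro lam
  have hlim : ‖T‖ ^ 2 - 2 * ‖lam‖ * c ≤ ‖T + lam • A‖ ^ 2 :=
    le_of_tendsto' ((hnorm.pow 2).sub (tendsto_const_nhds.mul hc)) fun n =>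
      T.norm_sq_sub_le_norm_add_smul_sq A lam (hx n).le
  have hc' : ‖lam‖ * c ≤ ‖lam‖ * (ε * ‖T‖ * ‖A‖) := mul_le_mul_of_nonneg_left hcle (norm_nonneg _)
  rw [norm_smul]
  linarith

/-- Sufficient sequential condition for `ε`-approximate Birkhoff-James orthogonality. -/
theorem approx_birkhoffJames_of_sequence
    {H : Type*} [NormedAddCommGroup H] [InnerProductSpace ℂ H] [CompleteSpace H]
    (T A : H →L[ℂ] H) (ε : ℝ) (hε0 : 0 ≤ ε) (hε1 : ε < 1)
    (x : ℕ → H) (hx : ∀ n, ‖x n‖ = 1)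
    (hnorm : Tendsto (fun n => ‖T (x n)‖) atTop (𝓝 ‖T‖))
    (c : ℝ)
    (hc : Tendsto (fun n => ‖(inner ℂ (T (x n)) (A (x n)) : ℂ)‖) atTop (𝓝 c))
    (hcle : c ≤ ε * ‖T‖ * ‖A‖) :
    ∀ lam : ℂ, ‖T + lam • A‖ ^ 2 ≥ ‖T‖ ^ 2 - 2 * ε * ‖T‖ * ‖lam • A‖ :=
  approx_birkhoffJames_of_sequence_general T A ε x hx hnorm c hc hcle
end

section
/- Let ρ > 0, let T, A ∈ B(H) admit unitary ρ-dilations U_T, U_A on a common space K ⊇ H, and let (xₙ) be a sequence of unit vectors in H. Then for every n, |⟨U_T xₙ, U_A xₙ⟩| ≤ (1/ρ²)|⟨Txₙ, Axₙ⟩| + √(1 − ‖Txₙ‖²/ρ²)·√(1 − ‖Axₙ‖²/ρ²). -/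
/-!
Split `U_T x` and `U_A x` along `K = H ⊕ Hᗮ`. The inner product splits accordingly, the
`H`-components are `Tx / ρ` and `Ax / ρ`, and by Pythagoras (the `U`'s being isometries) the
`Hᗮ`-components of unit vectors have norms `√(1 - ‖Tx‖² / ρ²)` and `√(1 - ‖Ax‖² / ρ²)`;
Cauchy–Schwarz on the `Hᗮ`-part gives the estimate.
-/

open scoped InnerProductSpace

namespace Submodule

variable {𝕜 E : Type*} [RCLike 𝕜] [NormedAddCommGroup E] [InnerProductSpace 𝕜 E]
  (K : Submodule 𝕜 E) [K.HasOrthogonalProjection]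

theorem inner_eq_inner_starProjection_add_inner_starProjection_orthogonal (u v : E) :
    ⟪u, v⟫_𝕜 = ⟪K.starProjection u, K.starProjection v⟫_𝕜 +
      ⟪Kᗮ.starProjection u, Kᗮ.starProjection v⟫_𝕜 := by
  have h₁ : ⟪K.starProjection u, Kᗮ.starProjection v⟫_𝕜 = 0 :=
    inner_right_of_mem_orthogonal (K.starProjection_apply_mem u) (Kᗮ.starProjection_apply_mem v)
  have h₂ : ⟪Kᗮ.starProjection u, K.starProjection v⟫_𝕜 = 0 :=
    inner_left_of_mem_orthogonal (K.starProjection_apply_mem v) (Kᗮ.starProjection_apply_mem u)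
  conv_lhs =>
    rw [← K.starProjection_add_starProjection_orthogonal u,
      ← K.starProjection_add_starProjection_orthogonal v]
  rw [inner_add_left, inner_add_right, inner_add_right, h₁, h₂, add_zero, zero_add]

theorem norm_inner_le_norm_inner_starProjection_add (u v : E) :
    ‖⟪u, v⟫_𝕜‖ ≤ ‖⟪K.starProjection u, K.starProjection v⟫_𝕜‖ +
      ‖Kᗮ.starProjection u‖ * ‖Kᗮ.starProjection v‖ := by
  rw [K.inner_eq_inner_starProjection_add_inner_starProjection_orthogonal u v]
  refine (norm_add_le _ _).trans ?_
  gcongr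
  exact norm_inner_le_norm _ _

theorem norm_starProjection_orthogonal_eq_sqrt (u : E) :
    ‖Kᗮ.starProjection u‖ = √(‖u‖ ^ 2 - ‖K.starProjection u‖ ^ 2) := by
  rw [K.norm_sq_eq_add_norm_sq_starProjection u, add_sub_cancel_left,
    Real.sqrt_sq (norm_nonneg _)]

end Submodule

section Dilation

variable {E : Type*} [NormedAddCommGroup E] [InnerProductSpace ℂ E]
  {K : Submodule ℂ E} [K.HasOrthogonalProjection] {ρ : ℝ}

theorem coe_apply_of_dilation {T : K →L[ℂ] K} {U : E →L[ℂ] E}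
    (hT : ∀ x : K, T x = (ρ : ℂ) • K.orthogonalProjectionOnto (U x)) (x : K) :
    (T x : E) = (ρ : ℂ) • K.starProjection (U x) := by
  rw [hT, K.starProjection_apply, Submodule.coe_smul]

theorem norm_apply_of_dilation {T : K →L[ℂ] K} {U : E →L[ℂ] E}
    (hT : ∀ x : K, T x = (ρ : ℂ) • K.orthogonalProjectionOnto (U x)) (x : K) :
    ‖T x‖ = |ρ| * ‖K.starProjection (U x)‖ := by
  rw [← K.norm_coe, coe_apply_of_dilation hT, norm_smul, Complex.norm_real, Real.norm_eq_abs]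

theorem norm_starProjection_orthogonal_of_dilation (hρ : ρ ≠ 0) {T : K →L[ℂ] K}
    {U : E →L[ℂ] E} (hU : ∀ y, ‖U y‖ = ‖y‖)
    (hT : ∀ x : K, T x = (ρ : ℂ) • K.orthogonalProjectionOnto (U x)) {x : K} (hx : ‖x‖ = 1) :
    ‖Kᗮ.starProjection (U x)‖ = √(1 - ‖T x‖ ^ 2 / ρ ^ 2) := by
  have hUx : ‖U x‖ = 1 := by rw [hU, K.norm_coe, hx]
  rw [K.norm_starProjection_orthogonal_eq_sqrt, norm_apply_of_dilation hT, hUx, mul_pow, sq_abs,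
    mul_div_cancel_left₀ _ (pow_ne_zero 2 hρ), one_pow]

theorem norm_inner_starProjection_of_dilation (hρ : ρ ≠ 0) {T A : K →L[ℂ] K}
    {U V : E →L[ℂ] E} (hT : ∀ x : K, T x = (ρ : ℂ) • K.orthogonalProjectionOnto (U x))
    (hA : ∀ x : K, A x = (ρ : ℂ) • K.orthogonalProjectionOnto (V x)) (x y : K) :
    ‖⟪K.starProjection (U x), K.starProjection (V y)⟫_ℂ‖ = 1 / ρ ^ 2 * ‖⟪T x, A y⟫_ℂ‖ := by
  rw [K.coe_inner, coe_apply_of_dilation hT, coe_apply_of_dilation hA, inner_smul_left,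
    inner_smul_right, norm_mul, norm_mul, Complex.norm_conj, Complex.norm_real, Real.norm_eq_abs,
    ← mul_assoc |ρ|, ← sq, sq_abs, one_div, inv_mul_cancel_left₀ (pow_ne_zero 2 hρ)]

end Dilation

/-- Key estimate for unitary `ρ`-dilations: the inner products of the dilations are
controlled by those of the original operators plus defect terms. -/
theorem inner_dilation_estimate
    {K : Type*} [NormedAddCommGroup K] [InnerProductSpace ℂ K] [CompleteSpace K]
    (p : Submodule ℂ K) [CompleteSpace p]
    (ρ : ℝ) (hρ : 0 < ρ)
    (T A : p →L[ℂ] p) (UT UA : K →L[ℂ] K)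
    (hUT : UT ∈ unitary (K →L[ℂ] K)) (hUA : UA ∈ unitary (K →L[ℂ] K))
    (hdilT : ∀ x : p, T x = (ρ : ℂ) • Submodule.orthogonalProjection p (UT (x : K)))
    (hdilA : ∀ x : p, A x = (ρ : ℂ) • Submodule.orthogonalProjection p (UA (x : K)))
    (x : ℕ → p) (hx : ∀ n, ‖x n‖ = 1) :
    ∀ n, ‖(inner ℂ (UT ((x n : K))) (UA ((x n : K))) : ℂ)‖ ≤
      (1 / ρ ^ 2) * ‖(inner ℂ (T (x n)) (A (x n)) : ℂ)‖ +
        Real.sqrt (1 - ‖T (x n)‖ ^ 2 / ρ ^ 2) * Real.sqrt (1 - ‖A (x n)‖ ^ 2 / ρ ^ 2) := by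
  intro n
  calc ‖⟪UT (x n), UA (x n)⟫_ℂ‖
      ≤ ‖⟪p.starProjection (UT (x n)), p.starProjection (UA (x n))⟫_ℂ‖ +
          ‖pᗮ.starProjection (UT (x n))‖ * ‖pᗮ.starProjection (UA (x n))‖ :=
        p.norm_inner_le_norm_inner_starProjection_add _ _
    _ = _ := by
      rw [norm_inner_starProjection_of_dilation hρ.ne' hdilT hdilA,
        norm_starProjection_orthogonal_of_dilation hρ.ne' (UT.norm_map_of_mem_unitary hUT) hdilT
          (hx n),
        norm_starProjection_orthogonal_of_dilation hρ.ne' (UA.norm_map_of_mem_unitary hUA) hdilA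
          (hx n)]
end
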